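/- arXiv:2009.07096 — 11 statements merged into one kernel-verified Lean document; each statement's English description precedes it below -/
import Mathlib

section
/- Let A, B be the 2-D Euler flux Jacobians at a uniform supersonic state with Mach number M = ‖U‖/c > 1, velocity U = ‖U‖(cos α, sin α), and let μ = arcsin(1/M). Then the angles ζ for which det(sin(ζ)A − cos(ζ)B) = 0 are exactly ζ ∈ {α, α+π, α−μ, α−μ+π, α+μ, α+μ+π} (modulo 2π). -/
/-- The 2-D Euler flux Jacobian in the direction `(nx, ny)`:  `An γ u v H nx ny = nx • A + ny • B`,
where `A`, `B` are the Jacobians of the Euler fluxes w.r.t. conservative variables. -/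
noncomputable def An (γ u v H nx ny : ℝ) : Matrix (Fin 4) (Fin 4) ℝ :=
  !![0, nx, ny, 0;
     (γ-1)*((u^2+v^2)/2)*nx - u*(u*nx+v*ny), (u*nx+v*ny)-(γ-2)*u*nx, u*ny-(γ-1)*v*nx, (γ-1)*nx;
     (γ-1)*((u^2+v^2)/2)*ny - v*(u*nx+v*ny), v*nx-(γ-1)*u*ny, (u*nx+v*ny)-(γ-2)*v*ny, (γ-1)*ny;
     ((γ-1)*((u^2+v^2)/2)-H)*(u*nx+v*ny), H*nx-(γ-1)*u*(u*nx+v*ny), H*ny-(γ-1)*v*(u*nx+v*ny), γ*(u*nx+v*ny)]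

open Real

/-! The characteristic matrix `sin ζ • A - cos ζ • B` is the flux Jacobian in the unit direction
`n = (sin ζ, -cos ζ)`, whose determinant is `(U·n)² ((U·n)² - c²)`. With `U·n = M c sin (ζ - α)`
it vanishes exactly when `sin (ζ - α) ∈ {0, ±1/M} = {0, ±sin μ}`, i.e. when `ζ - α` is congruent
to `0` or `±μ` modulo `π`. -/

lemma An_eq_smul_add_smul (γ u v H nx ny : ℝ) :
    An γ u v H nx ny = nx • An γ u v H 1 0 + ny • An γ u v H 0 1 := by
  ext i j
  fin_cases i <;> fin_cases j <;> simp [An] <;> ring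

lemma det_An (γ u v H nx ny : ℝ) :
    (An γ u v H nx ny).det =
      (u*nx+v*ny)^2 * ((u*nx+v*ny)^2 - ((γ-1)*(H-(u^2+v^2)/2))*(nx^2+ny^2)) := by
  rw [Matrix.det_succ_row_zero]
  simp [Fin.sum_univ_succ, Matrix.det_fin_three, An, Fin.succAbove, Matrix.submatrix_apply]
  ring

lemma sin_sq_eq_sin_sq_iff {x y : ℝ} :
    sin x ^ 2 = sin y ^ 2 ↔ ∃ n : ℤ, x = y + n * π ∨ x = -y + n * π := by
  rw [sin_sq_eq_half_sub, sin_sq_eq_half_sub, sub_right_inj, div_left_inj' two_ne_zero, eq_comm,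
    cos_eq_cos_iff]
  refine exists_congr fun n => or_congr ?_ ?_ <;> constructor <;> intro h <;> linarith

lemma sin_sub_eq_zero_iff {x a : ℝ} : sin (x - a) = 0 ↔ ∃ n : ℤ, x = a + n * π := by
  rw [sin_eq_zero_iff]
  exact exists_congr fun n => by constructor <;> intro h <;> linarith

lemma sin_sub_sq_eq_sin_sq_iff {x a y : ℝ} :
    sin (x - a) ^ 2 = sin y ^ 2 ↔ (∃ n : ℤ, x = a - y + n * π) ∨ ∃ n : ℤ, x = a + y + n * π := by
  rw [sin_sq_eq_sin_sq_iff, ← exists_or]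
  refine exists_congr fun n => or_comm.trans (or_congr ?_ ?_) <;>
    constructor <;> intro h <;> linarith

lemma exists_eq_add_int_mul_pi_iff {x a : ℝ} :
    (∃ n : ℤ, x = a + n * π) ↔ ∃ k : ℤ, x = a + 2 * k * π ∨ x = a + π + 2 * k * π := by
  constructor
  · rintro ⟨n, rfl⟩
    obtain ⟨k, rfl | rfl⟩ := Int.even_or_odd' n
    · exact ⟨k, Or.inl (by push_cast; ring)⟩
    · exact ⟨k, Or.inr (by push_cast; ring)⟩
  · rintro ⟨k, rfl | rfl⟩
    · exact ⟨2 * k, by push_cast; ring⟩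
    · exact ⟨2 * k + 1, by push_cast; ring⟩

/-- For a uniform supersonic state with Mach number , flow angle  and Mach
angle , the angles  for which  are
exactly  modulo . -/
theorem supersonic_characteristic_angles (γ c M α μ ζ u v H : ℝ)
    (hγ : 1 < γ) (hc : 0 < c) (hM : 1 < M)
    (hu : u = M * c * Real.cos α) (hv : v = M * c * Real.sin α)
    (hμ : μ = Real.arcsin (1 / M))
    (hH : H = c^2/(γ-1) + (u^2+v^2)/2) :
    ((Real.sin ζ) • (An γ u v H 1 0) - (Real.cos ζ) • (An γ u v H 0 1)).det = 0 ↔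
      ∃ k : ℤ, ζ = α + 2*k*Real.pi ∨ ζ = α + Real.pi + 2*k*Real.pi ∨
        ζ = α - μ + 2*k*Real.pi ∨ ζ = α - μ + Real.pi + 2*k*Real.pi ∨
        ζ = α + μ + 2*k*Real.pi ∨ ζ = α + μ + Real.pi + 2*k*Real.pi := by
  have hM0 : 0 < M := one_pos.trans hM
  have hsinμ : sin μ = 1 / M := by
    rw [hμ, sin_arcsin (by linarith [one_div_pos.mpr hM0]) ((div_le_one hM0).mpr hM.le)]
  have hnormal : u * sin ζ + v * -cos ζ = M * c * sin (ζ - α) := by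
    rw [hu, hv, sin_sub]; ring
  have hsound : (γ - 1) * (H - (u^2 + v^2) / 2) = c^2 := by
    rw [hH]; field_simp [(sub_pos.mpr hγ).ne']; ring
  have hdet : ((sin ζ) • An γ u v H 1 0 - (cos ζ) • An γ u v H 0 1).det
      = (c * M) ^ 4 * (sin (ζ - α) ^ 2 * (sin (ζ - α) ^ 2 - sin μ ^ 2)) := by
    rw [sub_eq_add_neg, ← neg_smul, ← An_eq_smul_add_smul, det_An, hnormal, hsound, hsinμ,
      neg_sq, sin_sq_add_cos_sq]
    field_simp
  rw [hdet, mul_eq_zero_iff_left (by positivity), mul_eq_zero, sub_eq_zero,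
    pow_eq_zero_iff two_ne_zero, sin_sub_eq_zero_iff, sin_sub_sq_eq_sin_sq_iff,
    exists_eq_add_int_mul_pi_iff, exists_eq_add_int_mul_pi_iff, exists_eq_add_int_mul_pi_iff,
    ← exists_or, ← exists_or]
  simp only [or_assoc]
end

section
/- Any simple-wave adjoint solution λ₀ lying in the kernel of sin(ζ)Aᵀ − cos(ζ)Bᵀ for ζ = α ± μ (Mach-line directions) satisfies the Giles–Pierce relation λ₀¹ = H λ₀⁴ component-wise, i.e., its first component equals the total enthalpy H times its fourth component. -/
open Real

/-!
On a Mach line the normal velocity `q = u nx + v ny` equals `±c`, so `H = q²/(γ-1) + |U|²/2`.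
With this, `(1, 0, 0, -H)` lies in the column space of the flux Jacobian `Aₙ`, and every vector
in the kernel of `Aₙᵀ` is orthogonal to the column space of `Aₙ`; orthogonality to
`(1, 0, 0, -H)` is exactly the Giles–Pierce relation.
-/

open Matrix

theorem Matrix.dotProduct_mulVec_eq_zero_of_transpose_mulVec_eq_zero {R m n : Type*}
    [CommSemiring R] [Fintype m] [Fintype n] {A : Matrix m n R} {l : m → R} (h : Aᵀ *ᵥ l = 0)
    (x : n → R) : l ⬝ᵥ (A *ᵥ x) = 0 := by
  rw [dotProduct_mulVec, ← mulVec_transpose, h, zero_dotProduct]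

theorem sq_normal_velocity_of_mach_line {M c α ζ u v : ℝ} (hM : 1 ≤ M)
    (hu : u = M * c * cos α) (hv : v = M * c * sin α)
    (hζ : ζ = α - arcsin (1 / M) ∨ ζ = α + arcsin (1 / M)) :
    (u * sin ζ + v * -cos ζ) ^ 2 = c ^ 2 := by
  have hM0 : 0 < M := by linarith
  have hsin : sin (arcsin (1 / M)) = 1 / M :=
    sin_arcsin (by linarith [one_div_pos.mpr hM0]) (div_le_one_of_le₀ hM hM0.le)
  have hq : u * sin ζ + v * -cos ζ = M * c * sin (ζ - α) := by
    rw [hu, hv, sin_sub]; ring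
  have hsin_sq : sin (ζ - α) ^ 2 = (1 / M) ^ 2 := by
    rcases hζ with rfl | rfl
    · rw [sub_sub_cancel_left, sin_neg, neg_sq, hsin]
    · rw [add_sub_cancel_left, hsin]
  rw [hq, mul_pow, hsin_sq]
  field_simp

theorem An_mulVec_eq_of_sonic_normal {γ u v H nx ny : ℝ} (hγ : γ ≠ 1)
    (hn : nx ^ 2 + ny ^ 2 = 1) (hq : u * nx + v * ny ≠ 0)
    (hH : H = (u * nx + v * ny) ^ 2 / (γ - 1) + (u ^ 2 + v ^ 2) / 2) :
    An γ u v H nx ny *ᵥ ![1 / (u * nx + v * ny), nx, ny,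
      -((2 - γ) * (u * nx + v * ny) / (γ - 1) + (u ^ 2 + v ^ 2) / 2 / (u * nx + v * ny))]
      = ![1, 0, 0, -H] := by
  have hγ' : γ - 1 ≠ 0 := sub_ne_zero.mpr hγ
  subst hH
  ext i
  fin_cases i <;>
    simp only [An, Fin.zero_eta, Fin.mk_one, Fin.reduceFinMk, Fin.isValue, mulVec_cons, mulVec_empty,
      Pi.add_apply, Pi.smul_apply, Function.comp_apply, cons_val_zero, cons_val_one, cons_val,
      head_cons, tail_cons, smul_eq_mul, add_zero, zero_add, mul_zero] <;>
    field_simp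
  · exact hn
  · linear_combination 2 * u * (u * nx + v * ny) * hn
  · linear_combination 2 * v * (u * nx + v * ny) * hn
  · linear_combination (2 * (u * nx + v * ny) ^ 2 + (γ - 1) * (u ^ 2 + v ^ 2)) * hn

theorem mach_line_kernel_giles_pierce_general (γ c M α μ ζ u v H : ℝ) (lam0 : Fin 4 → ℝ)
    (hγ : 1 < γ) (hc : 0 < c) (hM : 1 < M)
    (hu : u = M * c * Real.cos α) (hv : v = M * c * Real.sin α)
    (hμ : μ = Real.arcsin (1 / M))
    (hH : H = c^2/(γ-1) + (u^2+v^2)/2)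
    (hζ : ζ = α - μ ∨ ζ = α + μ)
    (hker : (An γ u v H (Real.sin ζ) (-(Real.cos ζ))).transpose.mulVec lam0 = 0) :
    lam0 0 = H * lam0 3 := by
  subst hμ
  have hq2 := sq_normal_velocity_of_mach_line hM.le hu hv hζ
  have hq : u * sin ζ + v * -cos ζ ≠ 0 := fun h => by
    rw [h, zero_pow two_ne_zero] at hq2
    exact hc.ne' (pow_eq_zero_iff two_ne_zero |>.mp hq2.symm)
  have hsonic : H = (u * sin ζ + v * -cos ζ) ^ 2 / (γ - 1) + (u ^ 2 + v ^ 2) / 2 := by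
    rw [hq2, hH]
  have hn : sin ζ ^ 2 + (-cos ζ) ^ 2 = 1 := by rw [neg_sq, sin_sq_add_cos_sq]
  have horth : lam0 ⬝ᵥ ![1, 0, 0, -H] = 0 := by
    rw [← An_mulVec_eq_of_sonic_normal hγ.ne' hn hq hsonic]
    exact dotProduct_mulVec_eq_zero_of_transpose_mulVec_eq_zero hker _
  simp only [dotProduct, Fin.sum_univ_four, Fin.isValue, cons_val_zero, cons_val_one, cons_val,
    mul_one, mul_zero, mul_neg, add_zero] at horth
  linarith

theorem mach_line_kernel_giles_pierce (γ ρ c M α μ ζ u v H : ℝ) (lam0 : Fin 4 → ℝ)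
    (hγ : 1 < γ) (hρ : 0 < ρ) (hc : 0 < c) (hM : 1 < M)
    (hu : u = M * c * Real.cos α) (hv : v = M * c * Real.sin α)
    (hμ : μ = Real.arcsin (1 / M))
    (hH : H = c^2/(γ-1) + (u^2+v^2)/2)
    (hζ : ζ = α - μ ∨ ζ = α + μ)
    (hker : (An γ u v H (Real.sin ζ) (-(Real.cos ζ))).transpose.mulVec lam0 = 0) :
    lam0 0 = H * lam0 3 :=
  mach_line_kernel_giles_pierce_general γ c M α μ ζ u v H lam0 hγ hc hM hu hv hμ hH hζ hker
end

section
/- The four physical source term vectors δR¹ = (1, u_x, u_y, H), δR² = (0, −ρu_y, ρu_x, 0), δR³ = (−1/(2H), 0, 0, 1/2), δR⁴ = (1/p₀)((γ−1)/γ + 1/(γM²), u_x((γ−1)/γ + 2/(γM²)), u_y((γ−1)/γ + 2/(γM²)), H((γ−1)/γ + 1/(γM²))) are linearly independent in ℝ⁴, provided ρ > 0, H > 0, p₀ > 0, M > 0 and (u_x, u_y) ≠ (0,0). -/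
/-!
With `a = (γ-1)/γ + 1/(γM²)` and `b = (γ-1)/γ + 2/(γM²)`, the fourth source is
`δR⁴ = (a • δR¹ + (b - a) • (0, u_x, u_y, 0)) / p₀` and `b - a = 1/(γM²)`. In the determinant
of the matrix with rows `δR¹, …, δR⁴`, the coordinates `{0, 3}` (spanned by
`δR¹ - (0, u_x, u_y, 0)` and `δR³`) and `{1, 2}` (spanned by `δR²` and `(0, u_x, u_y, 0)`)
decouple, so the determinant is `ρ (u_x² + u_y²) / (p₀ γ M²)`, which is nonzero.
-/

open Matrix

noncomputable def gilesPierceSourceMatrix (γ ρ u v H M p0 : ℝ) : Matrix (Fin 4) (Fin 4) ℝ :=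
  !![1, u, v, H;
     0, -(ρ*v), ρ*u, 0;
     -(1/(2*H)), 0, 0, 1/2;
     (1/p0) * ((γ-1)/γ + 1/(γ*M^2)), (u/p0) * ((γ-1)/γ + 2/(γ*M^2)),
       (v/p0) * ((γ-1)/γ + 2/(γ*M^2)), (H/p0) * ((γ-1)/γ + 1/(γ*M^2))]

theorem det_gilesPierceSourceMatrix (γ ρ u v M p0 : ℝ) {H : ℝ} (hH : H ≠ 0) :
    (gilesPierceSourceMatrix γ ρ u v H M p0).det = ρ * (u * u + v * v) / (p0 * γ * M ^ 2) := by
  rw [gilesPierceSourceMatrix, det_succ_row_zero]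
  simp only [Fin.sum_univ_four, det_fin_three, submatrix_apply, of_apply, Fin.succAbove, cons_val,
    Fin.reduceSucc, Fin.reduceCastSucc, Fin.reduceLT, ite_true, ite_false, Fin.coe_ofNat_eq_mod]
  field_simp
  ring

theorem det_gilesPierceSourceMatrix_ne_zero {γ ρ u v H M p0 : ℝ} (hγ : γ ≠ 0) (hρ : ρ ≠ 0)
    (hH : H ≠ 0) (hp0 : p0 ≠ 0) (hM : M ≠ 0) (hU : (u, v) ≠ (0, 0)) :
    (gilesPierceSourceMatrix γ ρ u v H M p0).det ≠ 0 := by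
  have huv : u * u + v * v ≠ 0 := fun h ↦ hU (Prod.ext_iff.2 (mul_self_add_mul_self_eq_zero.1 h))
  rw [det_gilesPierceSourceMatrix γ ρ u v M p0 hH]
  exact div_ne_zero (mul_ne_zero hρ huv) (by positivity)

theorem giles_pierce_sources_linearIndependent (γ ρ u v H M p0 : ℝ)
    (hγ : 1 < γ) (hρ : 0 < ρ) (hH : 0 < H) (hp0 : 0 < p0) (hM : 0 < M)
    (hU : (u, v) ≠ (0, 0)) :
    LinearIndependent ℝ
      ![(![1, u, v, H] : Fin 4 → ℝ),
        ![0, -(ρ*v), ρ*u, 0],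
        ![-(1/(2*H)), 0, 0, 1/2],
        ![(1/p0) * ((γ-1)/γ + 1/(γ*M^2)),
          (u/p0) * ((γ-1)/γ + 2/(γ*M^2)),
          (v/p0) * ((γ-1)/γ + 2/(γ*M^2)),
          (H/p0) * ((γ-1)/γ + 1/(γ*M^2))]] :=
  linearIndependent_rows_of_det_ne_zero <| det_gilesPierceSourceMatrix_ne_zero
    (zero_lt_one.trans hγ).ne' hρ.ne' hH.ne' hp0.ne' hM.ne' hU
end

section
/- The 4×4 matrix whose rows are given in equation (e:physp3) of the paper (with entries 1 + (γ−1)M²/2, −(1+(γ−1)M²)u_x/‖U‖², etc.) is the inverse (up to the sign and scaling conventions of the paper) of the matrix whose columns are the four physical source vectors δR¹, δR², δR³, δR⁴ divided by ε; that is, multiplying the two matrices yields the 4×4 identity. -/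
/-!
Entry (i, j) of the product is the dot product of the i-th row of the candidate inverse with
δRʲ/ε. The speed of sound enters only through c², which M²c² = ‖U‖² eliminates; every entry is
then a rational identity in the remaining variables. The only cancellations that are not
immediate involve δR⁴: with k = (γ-1)M², its coefficients are (1+k)/(γM²) and (2+k)/(γM²), so the
first row gives (2+k)(1+k) - (1+k)(2+k) = 0 and the last row gives (2+k) - (1+k) = 1.
-/

section
variable {K : Type*} [Field K]

/-- The rows are the source vectors δR¹/ε, …, δR⁴/ε of the paper. -/
def physicalSourceRows (γ ρ u v M H p0 : K) : Matrix (Fin 4) (Fin 4) K :=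
  !![1, u, v, H;
     0, -(ρ*v), ρ*u, 0;
     -(1/(2*H)), 0, 0, 1/2;
     (1/p0) * ((γ-1)/γ + 1/(γ*M^2)),
       (u/p0) * ((γ-1)/γ + 2/(γ*M^2)),
       (v/p0) * ((γ-1)/γ + 2/(γ*M^2)),
       (H/p0) * ((γ-1)/γ + 1/(γ*M^2))]

def physicalSourceInv (γ ρ u v c M H p0 : K) : Matrix (Fin 4) (Fin 4) K :=
  !![1+(γ-1)*M^2/2, -((1+(γ-1)*M^2)*u/(u^2+v^2)), -((1+(γ-1)*M^2)*v/(u^2+v^2)),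
       (1+(γ-1)*M^2/2)/H;
     0, -(v/(ρ*(u^2+v^2))), u/(ρ*(u^2+v^2)), 0;
     -H, 0, 0, 1;
     -(γ*p0*M^2/2), γ*p0*u/c^2, γ*p0*v/c^2, -(γ*p0*M^2/(2*H))]

theorem physicalSourceInv_mul_transpose_physicalSourceRows [NeZero (2 : K)] {γ ρ u v c M H p0 : K}
    (hγ : γ ≠ 0) (hρ : ρ ≠ 0) (hp0 : p0 ≠ 0) (hM : M ≠ 0) (hH : H ≠ 0)
    (hU : u^2 + v^2 ≠ 0) (hMc : M^2 * c^2 = u^2 + v^2) :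
    physicalSourceInv γ ρ u v c M H p0 * (physicalSourceRows γ ρ u v M H p0).transpose = 1 := by
  have hc : c^2 = (u^2 + v^2) / M^2 := by rw [← hMc]; field_simp
  ext i j
  fin_cases i <;> fin_cases j <;>
    simp only [physicalSourceInv, physicalSourceRows, hc, Matrix.mul_apply', dotProduct,
      Fin.sum_univ_four, Matrix.transpose_apply, Matrix.of_apply, Matrix.cons_val', Matrix.cons_val,
      Matrix.cons_val_zero, Matrix.cons_val_one, Matrix.cons_val_fin_one, Matrix.one_apply_eq,
      Matrix.one_apply_ne, ne_eq, Fin.reduceEq, not_false_eq_true, Fin.isValue, Fin.zero_eta,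
      Fin.mk_one, Fin.reduceFinMk] <;>
    field_simp <;> ring

end

theorem giles_pierce_matrix_inverse_general (γ ρ u v c M H p0 : ℝ)
    (hγ : 1 < γ) (hρ : 0 < ρ) (hp0 : 0 < p0)
    (hM : 0 < M) (hMc : M^2 * c^2 = u^2 + v^2) (hU : 0 < u^2 + v^2)
    (hH : H = c^2/(γ-1) + (u^2+v^2)/2) :
    (!![1+(γ-1)*M^2/2, -((1+(γ-1)*M^2)*u/(u^2+v^2)), -((1+(γ-1)*M^2)*v/(u^2+v^2)), (1+(γ-1)*M^2/2)/H;
        0, -(v/(ρ*(u^2+v^2))), u/(ρ*(u^2+v^2)), 0;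
        -H, 0, 0, 1;
        -(γ*p0*M^2/2), γ*p0*u/c^2, γ*p0*v/c^2, -(γ*p0*M^2/(2*H))] : Matrix (Fin 4) (Fin 4) ℝ) *
    (!![1, u, v, H;
        0, -(ρ*v), ρ*u, 0;
        -(1/(2*H)), 0, 0, 1/2;
        (1/p0) * ((γ-1)/γ + 1/(γ*M^2)),
          (u/p0) * ((γ-1)/γ + 2/(γ*M^2)),
          (v/p0) * ((γ-1)/γ + 2/(γ*M^2)),
          (H/p0) * ((γ-1)/γ + 1/(γ*M^2))] : Matrix (Fin 4) (Fin 4) ℝ).transpose = 1 := by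
  have hH0 : 0 < H :=
    hH ▸ add_pos_of_nonneg_of_pos (div_nonneg (sq_nonneg c) (sub_nonneg.2 hγ.le)) (half_pos hU)
  exact physicalSourceInv_mul_transpose_physicalSourceRows (one_pos.trans hγ).ne' hρ.ne' hp0.ne'
    hM.ne' hH0.ne' hU.ne' hMc

theorem giles_pierce_matrix_inverse (γ ρ p u v c M H p0 : ℝ)
    (hγ : 1 < γ) (hρ : 0 < ρ) (hp : 0 < p) (hp0 : 0 < p0)
    (hc : c^2 = γ * p / ρ) (hcpos : 0 < c)
    (hM : 0 < M) (hMc : M^2 * c^2 = u^2 + v^2) (hU : 0 < u^2 + v^2)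
    (hH : H = c^2/(γ-1) + (u^2+v^2)/2) :
    (!![1+(γ-1)*M^2/2, -((1+(γ-1)*M^2)*u/(u^2+v^2)), -((1+(γ-1)*M^2)*v/(u^2+v^2)), (1+(γ-1)*M^2/2)/H;
        0, -(v/(ρ*(u^2+v^2))), u/(ρ*(u^2+v^2)), 0;
        -H, 0, 0, 1;
        -(γ*p0*M^2/2), γ*p0*u/c^2, γ*p0*v/c^2, -(γ*p0*M^2/(2*H))] : Matrix (Fin 4) (Fin 4) ℝ) *
    (!![1, u, v, H;
        0, -(ρ*v), ρ*u, 0;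
        -(1/(2*H)), 0, 0, 1/2;
        (1/p0) * ((γ-1)/γ + 1/(γ*M^2)),
          (u/p0) * ((γ-1)/γ + 2/(γ*M^2)),
          (v/p0) * ((γ-1)/γ + 2/(γ*M^2)),
          (H/p0) * ((γ-1)/γ + 1/(γ*M^2))] : Matrix (Fin 4) (Fin 4) ℝ).transpose = 1 :=
  giles_pierce_matrix_inverse_general γ ρ u v c M H p0 hγ hρ hp0 hM hMc hU hH
end

section
/- If ψ : Ω → ℝ⁴ is a smooth solution of the continuous 2-D Euler adjoint equation −Aᵀ∂_xψ − Bᵀ∂_yψ = 0, where A, B are the flux Jacobians evaluated at a smooth Euler solution W, then at every point ⟨U, ∇ψ₁⟩ − H⟨U, ∇ψ₄⟩ = 0, i.e., U·∇ψ₁ = H U·∇ψ₄. -/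
/-! The vector `(2, u, v, 0)` is mapped by every directional flux Jacobian onto a multiple of
`(1, 0, 0, -H)`: `Aₙ (2, u, v, 0) = (U·n) (1, 0, 0, -H)`, independently of `γ`. Pairing the adjoint
equation `Aᵀ ∂ₓψ + Bᵀ ∂_yψ = 0` with `(2, u, v, 0)` — twice row 1 plus `u` times row 2 plus `v` times
row 3 — therefore leaves `u (∂ₓψ₁ - H ∂ₓψ₄) + v (∂_yψ₁ - H ∂_yψ₄) = 0`. -/

open Matrix

theorem An_mulVec_convective (γ u v H nx ny : ℝ) :
    An γ u v H nx ny *ᵥ ![2, u, v, 0] = (u * nx + v * ny) • ![1, 0, 0, -H] := by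
  ext i
  fin_cases i <;>
    simp only [An, mulVec, dotProduct, Fin.sum_univ_four, of_apply, cons_val, Pi.smul_apply,
      smul_eq_mul, Fin.zero_eta, Fin.mk_one, Fin.reduceFinMk] <;> ring

theorem convective_dotProduct_transpose_An_mulVec (γ u v H nx ny : ℝ) (a : Fin 4 → ℝ) :
    ![2, u, v, 0] ⬝ᵥ ((An γ u v H nx ny)ᵀ *ᵥ a) = (u * nx + v * ny) * (a 0 - H * a 3) := by
  rw [dotProduct_mulVec, vecMul_transpose, An_mulVec_convective, smul_dotProduct,
    smul_eq_mul, dotProduct, Fin.sum_univ_four]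
  simp only [cons_val, one_mul, zero_mul, add_zero, neg_mul, sub_eq_add_neg]

theorem adjoint_convected_relation_general (γ : ℝ)
    (u v H : ℝ × ℝ → ℝ) (ψ : ℝ × ℝ → Fin 4 → ℝ) (z : ℝ × ℝ)
    (hadj :
      (An γ (u z) (v z) (H z) 1 0).transpose.mulVec
          (fun i => fderiv ℝ (fun q => ψ q i) z ((1 : ℝ), (0 : ℝ)))
      + (An γ (u z) (v z) (H z) 0 1).transpose.mulVec
          (fun i => fderiv ℝ (fun q => ψ q i) z ((0 : ℝ), (1 : ℝ))) = 0) :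
    u z * fderiv ℝ (fun q => ψ q 0) z ((1 : ℝ), (0 : ℝ))
      + v z * fderiv ℝ (fun q => ψ q 0) z ((0 : ℝ), (1 : ℝ))
    = H z * (u z * fderiv ℝ (fun q => ψ q 3) z ((1 : ℝ), (0 : ℝ))
      + v z * fderiv ℝ (fun q => ψ q 3) z ((0 : ℝ), (1 : ℝ))) := by
  have paired := congrArg (![2, u z, v z, 0] ⬝ᵥ ·) hadj
  simp only [dotProduct_add, convective_dotProduct_transpose_An_mulVec, dotProduct_zero] at paired
  linear_combination paired

theorem adjoint_convected_relation (γ : ℝ) (hγ : 1 < γ)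
    (ρ u v E H : ℝ × ℝ → ℝ) (ψ : ℝ × ℝ → Fin 4 → ℝ) (z : ℝ × ℝ)
    (hρ : ∀ q, 0 < ρ q)
    (hH : ∀ q, H q = E q + (γ-1) * (E q - (u q^2 + v q^2)/2))
    (hψ : ∀ i, DifferentiableAt ℝ (fun q => ψ q i) z)
    (hadj :
      (An γ (u z) (v z) (H z) 1 0).transpose.mulVec
          (fun i => fderiv ℝ (fun q => ψ q i) z ((1 : ℝ), (0 : ℝ)))
      + (An γ (u z) (v z) (H z) 0 1).transpose.mulVec
          (fun i => fderiv ℝ (fun q => ψ q i) z ((0 : ℝ), (1 : ℝ))) = 0) :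
    u z * fderiv ℝ (fun q => ψ q 0) z ((1 : ℝ), (0 : ℝ))
      + v z * fderiv ℝ (fun q => ψ q 0) z ((0 : ℝ), (1 : ℝ))
    = H z * (u z * fderiv ℝ (fun q => ψ q 3) z ((1 : ℝ), (0 : ℝ))
      + v z * fderiv ℝ (fun q => ψ q 3) z ((0 : ℝ), (1 : ℝ))) :=
  adjoint_convected_relation_general γ u v H ψ z hadj
end

section
/- Under the same hypotheses (continuous adjoint ψ across a Rankine–Hugoniot shock Σ, with [ψ]=0 and [∂_tψ]=0), the fourth adjoint equation yields the jump relation (γ−1)[n_x∂_nψ₂ + n_y∂_nψ₃] + γ[v_n ∂_nψ₄] = 0 across Σ. -/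
/-
Only the energy row of the adjoint system matters. The fourth column of the flux Jacobian in the
direction `(nx, ny)` is `((γ-1) nx, (γ-1) ny, ... , γ (u nx + v ny))`, so the energy row of
`A_nᵀ ∂ₙψ + A_tᵀ ∂ₜψ = 0` reads `(γ-1)(nx ∂ₙψ₂ + ny ∂ₙψ₃) + γ vₙ ∂ₙψ₄ = -(tangential terms)`.
The tangential terms involve only `vₜ` and `∂ₜψ`, which are continuous across the shock, so they
cancel in the jump.
-/

theorem An_transpose_mulVec_three (γ u v H nx ny : ℝ) (D : Fin 4 → ℝ) :
    ((An γ u v H nx ny).transpose.mulVec D) 3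
      = (γ-1) * (nx * D 1 + ny * D 2) + γ * (u*nx + v*ny) * D 3 := by
  simp only [An, Matrix.mulVec, Matrix.transpose, dotProduct, Fin.sum_univ_four, Matrix.of_apply,
    Matrix.cons_val', Matrix.cons_val_fin_one, Matrix.cons_val, Matrix.cons_val_zero,
    Matrix.cons_val_one]
  ring

theorem adjoint_energy_row (γ H vn vt nx ny : ℝ) (hn : nx^2 + ny^2 = 1) (Dn Dt : Fin 4 → ℝ)
    (hadj : (An γ (vn*nx - vt*ny) (vn*ny + vt*nx) H nx ny).transpose.mulVec Dn
           + (An γ (vn*nx - vt*ny) (vn*ny + vt*nx) H (-ny) nx).transpose.mulVec Dt = 0) :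
    (γ-1) * (nx * Dn 1 + ny * Dn 2) + γ * (vn * Dn 3)
      = -((γ-1) * (-ny * Dt 1 + nx * Dt 2) + γ * vt * Dt 3) := by
  have h3 := congrFun hadj 3
  rw [Pi.add_apply, Pi.zero_apply, An_transpose_mulVec_three, An_transpose_mulVec_three] at h3
  have hvn : (vn*nx - vt*ny) * nx + (vn*ny + vt*nx) * ny = vn := by linear_combination vn * hn
  have hvt : (vn*nx - vt*ny) * (-ny) + (vn*ny + vt*nx) * nx = vt := by linear_combination vt * hn
  rw [hvn, hvt] at h3
  linear_combination h3

theorem adjoint_shock_jump_relation_2_general (γ H vt nx ny vnp vnm : ℝ)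
    (Dnp Dnm Dt : Fin 4 → ℝ)
    (hn : nx^2 + ny^2 = 1)
    (hadjp : (An γ (vnp*nx - vt*ny) (vnp*ny + vt*nx) H nx ny).transpose.mulVec Dnp
           + (An γ (vnp*nx - vt*ny) (vnp*ny + vt*nx) H (-ny) nx).transpose.mulVec Dt = 0)
    (hadjm : (An γ (vnm*nx - vt*ny) (vnm*ny + vt*nx) H nx ny).transpose.mulVec Dnm
           + (An γ (vnm*nx - vt*ny) (vnm*ny + vt*nx) H (-ny) nx).transpose.mulVec Dt = 0) :
    (γ-1) * ((nx * Dnp 1 + ny * Dnp 2) - (nx * Dnm 1 + ny * Dnm 2))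
      + γ * (vnp * Dnp 3 - vnm * Dnm 3) = 0 := by
  linear_combination adjoint_energy_row γ H vnp vt nx ny hn Dnp Dt hadjp
    - adjoint_energy_row γ H vnm vt nx ny hn Dnm Dt hadjm

theorem adjoint_shock_jump_relation_2 (γ H vt nx ny vnp vnm ρp ρm : ℝ)
    (Dnp Dnm Dt : Fin 4 → ℝ)
    (hγ : 1 < γ) (hn : nx^2 + ny^2 = 1)
    (hρp : 0 < ρp) (hρm : 0 < ρm)
    (hmass : ρp * vnp = ρm * vnm)
    (hadjp : (An γ (vnp*nx - vt*ny) (vnp*ny + vt*nx) H nx ny).transpose.mulVec Dnp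
           + (An γ (vnp*nx - vt*ny) (vnp*ny + vt*nx) H (-ny) nx).transpose.mulVec Dt = 0)
    (hadjm : (An γ (vnm*nx - vt*ny) (vnm*ny + vt*nx) H nx ny).transpose.mulVec Dnm
           + (An γ (vnm*nx - vt*ny) (vnm*ny + vt*nx) H (-ny) nx).transpose.mulVec Dt = 0) :
    (γ-1) * ((nx * Dnp 1 + ny * Dnp 2) - (nx * Dnm 1 + ny * Dnm 2))
      + γ * (vnp * Dnp 3 - vnm * Dnm 3) = 0 :=
  adjoint_shock_jump_relation_2_general γ H vt nx ny vnp vnm Dnp Dnm Dt hn hadjp hadjm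
end

section
/- Under the same hypotheses, the combinations n_x(row 3) − n_y(row 2) and n_x(row 2) + n_y(row 3) of the adjoint system give, after applying the jump operator: [v_n(−n_y∂_nψ₂ + n_x∂_nψ₃ + v_t∂_nψ₄)] + [v_n](n_x∂_tψ₂ + n_y∂_tψ₃) = 0 and [∂_nψ₁] + [(u+v_n n_x)∂_nψ₂ + (v+v_n n_y)∂_nψ₃ + (H+v_n²)∂_nψ₄] + [v_n]v_t∂_tψ₄ = 0. -/
open Matrix

section RowCombinations

variable {γ u v H mx my q : ℝ} (D : Fin 4 → ℝ)

theorem An_transpose_mulVec_normal_combination (hm : mx ^ 2 + my ^ 2 = 1)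
    (hq : u * mx + v * my = q) :
    mx * ((An γ u v H mx my)ᵀ *ᵥ D) 1 + my * ((An γ u v H mx my)ᵀ *ᵥ D) 2
        + q * ((An γ u v H mx my)ᵀ *ᵥ D) 3 =
      D 0 + (u + q * mx) * D 1 + (v + q * my) * D 2 + (H + q ^ 2) * D 3 := by
  subst hq
  simp only [An, mulVec, dotProduct, Fin.sum_univ_four, transpose_apply, of_apply, cons_val',
    cons_val_zero, cons_val_one, cons_val, cons_val_fin_one, Fin.isValue]
  linear_combination (D 0 + u * D 1 + v * D 2 + H * D 3) * hm

theorem An_transpose_mulVec_tangential_combination {qt : ℝ} (hq : u * mx + v * my = q)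
    (hqt : v * mx - u * my = qt) :
    mx * ((An γ u v H mx my)ᵀ *ᵥ D) 2 - my * ((An γ u v H mx my)ᵀ *ᵥ D) 1
        + qt * ((An γ u v H mx my)ᵀ *ᵥ D) 3 =
      q * (-my * D 1 + mx * D 2 + qt * D 3) := by
  subst hq hqt
  simp only [An, mulVec, dotProduct, Fin.sum_univ_four, transpose_apply, of_apply, cons_val',
    cons_val_zero, cons_val_one, cons_val, cons_val_fin_one, Fin.isValue]
  ring

end RowCombinations

theorem rotated_velocity_dot_normal {nx ny : ℝ} (vn vt : ℝ) (hn : nx ^ 2 + ny ^ 2 = 1) :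
    (vn*nx - vt*ny) * nx + (vn*ny + vt*nx) * ny = vn := by
  linear_combination vn * hn

theorem rotated_velocity_dot_tangent {nx ny : ℝ} (vn vt : ℝ) (hn : nx ^ 2 + ny ^ 2 = 1) :
    (vn*nx - vt*ny) * -ny + (vn*ny + vt*nx) * nx = vt := by
  linear_combination vt * hn

section ShockSide

variable {γ H vn vt nx ny : ℝ} {Dn Dt : Fin 4 → ℝ}

theorem adjoint_tangential_row_combination (hn : nx ^ 2 + ny ^ 2 = 1)
    (hadj : (An γ (vn*nx - vt*ny) (vn*ny + vt*nx) H nx ny)ᵀ *ᵥ Dn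
      + (An γ (vn*nx - vt*ny) (vn*ny + vt*nx) H (-ny) nx)ᵀ *ᵥ Dt = 0) :
    vn * (-ny * Dn 1 + nx * Dn 2 + vt * Dn 3)
      + (Dt 0 + ((vn*nx - vt*ny) - vt*ny) * Dt 1 + ((vn*ny + vt*nx) + vt*nx) * Dt 2
          + (H + vt^2) * Dt 3) = 0 := by
  have h1 := congrFun hadj 1
  have h2 := congrFun hadj 2
  have h3 := congrFun hadj 3
  simp only [Pi.add_apply, Pi.zero_apply] at h1 h2 h3
  have hN := An_transpose_mulVec_tangential_combination (γ := γ) (H := H) Dn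
    (rotated_velocity_dot_normal vn vt hn)
    (show (vn*ny + vt*nx) * nx - (vn*nx - vt*ny) * ny = vt by linear_combination vt * hn)
  have hT := An_transpose_mulVec_normal_combination (γ := γ) (H := H) Dt
    (show (-ny) ^ 2 + nx ^ 2 = 1 by linear_combination hn)
    (rotated_velocity_dot_tangent vn vt hn)
  linear_combination (nx * h2 - ny * h1 + vt * h3) - hN - hT

theorem adjoint_normal_row_combination (hn : nx ^ 2 + ny ^ 2 = 1)
    (hadj : (An γ (vn*nx - vt*ny) (vn*ny + vt*nx) H nx ny)ᵀ *ᵥ Dn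
      + (An γ (vn*nx - vt*ny) (vn*ny + vt*nx) H (-ny) nx)ᵀ *ᵥ Dt = 0) :
    Dn 0 + ((vn*nx - vt*ny) + vn*nx) * Dn 1 + ((vn*ny + vt*nx) + vn*ny) * Dn 2
      + (H + vn^2) * Dn 3 + vt * (nx * Dt 1 + ny * Dt 2 + vn * Dt 3) = 0 := by
  have h1 := congrFun hadj 1
  have h2 := congrFun hadj 2
  have h3 := congrFun hadj 3
  simp only [Pi.add_apply, Pi.zero_apply] at h1 h2 h3
  have hN := An_transpose_mulVec_normal_combination (γ := γ) (H := H) Dn hn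
    (rotated_velocity_dot_normal vn vt hn)
  have hT := An_transpose_mulVec_tangential_combination (γ := γ) (H := H) Dt
    (rotated_velocity_dot_tangent vn vt hn)
    (show (vn*ny + vt*nx) * -ny - (vn*nx - vt*ny) * nx = -vn by linear_combination -vn * hn)
  linear_combination (nx * h1 + ny * h2 + vn * h3) - hN + hT

end ShockSide

theorem adjoint_shock_jump_relations_3_4_general (γ H vt nx ny vnp vnm : ℝ)
    (Dnp Dnm Dt : Fin 4 → ℝ)
    (hn : nx^2 + ny^2 = 1)
    (hadjp : (An γ (vnp*nx - vt*ny) (vnp*ny + vt*nx) H nx ny).transpose.mulVec Dnp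
           + (An γ (vnp*nx - vt*ny) (vnp*ny + vt*nx) H (-ny) nx).transpose.mulVec Dt = 0)
    (hadjm : (An γ (vnm*nx - vt*ny) (vnm*ny + vt*nx) H nx ny).transpose.mulVec Dnm
           + (An γ (vnm*nx - vt*ny) (vnm*ny + vt*nx) H (-ny) nx).transpose.mulVec Dt = 0) :
    (vnp * (-ny * Dnp 1 + nx * Dnp 2 + vt * Dnp 3)
       - vnm * (-ny * Dnm 1 + nx * Dnm 2 + vt * Dnm 3))
      + (vnp - vnm) * (nx * Dt 1 + ny * Dt 2) = 0 ∧
    (Dnp 0 - Dnm 0)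
      + (((vnp*nx - vt*ny) + vnp*nx) * Dnp 1 + ((vnp*ny + vt*nx) + vnp*ny) * Dnp 2
          + (H + vnp^2) * Dnp 3)
      - (((vnm*nx - vt*ny) + vnm*nx) * Dnm 1 + ((vnm*ny + vt*nx) + vnm*ny) * Dnm 2
          + (H + vnm^2) * Dnm 3)
      + (vnp - vnm) * vt * Dt 3 = 0 :=
  ⟨by linear_combination adjoint_tangential_row_combination hn hadjp
      - adjoint_tangential_row_combination hn hadjm,
    by linear_combination adjoint_normal_row_combination hn hadjp
      - adjoint_normal_row_combination hn hadjm⟩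

theorem adjoint_shock_jump_relations_3_4 (γ H vt nx ny vnp vnm ρp ρm : ℝ)
    (Dnp Dnm Dt : Fin 4 → ℝ)
    (hγ : 1 < γ) (hn : nx^2 + ny^2 = 1)
    (hρp : 0 < ρp) (hρm : 0 < ρm)
    (hmass : ρp * vnp = ρm * vnm)
    (hadjp : (An γ (vnp*nx - vt*ny) (vnp*ny + vt*nx) H nx ny).transpose.mulVec Dnp
           + (An γ (vnp*nx - vt*ny) (vnp*ny + vt*nx) H (-ny) nx).transpose.mulVec Dt = 0)
    (hadjm : (An γ (vnm*nx - vt*ny) (vnm*ny + vt*nx) H nx ny).transpose.mulVec Dnm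
           + (An γ (vnm*nx - vt*ny) (vnm*ny + vt*nx) H (-ny) nx).transpose.mulVec Dt = 0) :
    (vnp * (-ny * Dnp 1 + nx * Dnp 2 + vt * Dnp 3)
       - vnm * (-ny * Dnm 1 + nx * Dnm 2 + vt * Dnm 3))
      + (vnp - vnm) * (nx * Dt 1 + ny * Dt 2) = 0 ∧
    (Dnp 0 - Dnm 0)
      + (((vnp*nx - vt*ny) + vnp*nx) * Dnp 1 + ((vnp*ny + vt*nx) + vnp*ny) * Dnp 2
          + (H + vnp^2) * Dnp 3)
      - (((vnm*nx - vt*ny) + vnm*nx) * Dnm 1 + ((vnm*ny + vt*nx) + vnm*ny) * Dnm 2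
          + (H + vnm^2) * Dnm 3)
      + (vnp - vnm) * vt * Dt 3 = 0 :=
  adjoint_shock_jump_relations_3_4_general γ H vt nx ny vnp vnm Dnp Dnm Dt hn hadjp hadjm
end

section
/- The adjoint interior shock condition [−n_yF_x(W) + n_xF_y(W)]·∂_tψ = 0 across a 2-D Euler shock simplifies, using the RH relations, to v_t[ρ](∂_tψ₁ + H∂_tψ₄) + ([p] + v_t²[ρ])(−n_y∂_tψ₂ + n_x∂_tψ₃) = 0. -/
/-! The tangential flux `-n_y F_x + n_x F_y` of a state `(ρ, u, v, p, H)` is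
`ρ w (1, u, v, H) + p (0, -n_y, n_x, 0)` with `w = -n_y u + n_x v`, and for `(u, v) = vₙ n + v_t t`
with `|n| = 1` one has `w = v_t` on both sides of the shock. In the jump, `[ρu] = [ρvₙ] n_x - v_t n_y [ρ]`
and `[ρv] = [ρvₙ] n_y + v_t n_x [ρ]`, so the mass relation `[ρvₙ] = 0` leaves exactly
`v_t² [ρ] (-n_y ∂_tψ₂ + n_x ∂_tψ₃)` next to the pressure term. -/

open Matrix

namespace Euler2D

def fluxX (ρ u v p H : ℝ) : Fin 4 → ℝ := ![ρ * u, ρ * u ^ 2 + p, ρ * u * v, ρ * u * H]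

def fluxY (ρ u v p H : ℝ) : Fin 4 → ℝ := ![ρ * v, ρ * u * v, ρ * v ^ 2 + p, ρ * v * H]

def tangentialFlux (nx ny ρ u v p H : ℝ) : Fin 4 → ℝ :=
  (-ny) • fluxX ρ u v p H + nx • fluxY ρ u v p H

theorem tangentialFlux_dotProduct (nx ny ρ u v p H : ℝ) (ψ : Fin 4 → ℝ) :
    tangentialFlux nx ny ρ u v p H ⬝ᵥ ψ
      = ρ * (-ny * u + nx * v) * (ψ 0 + u * ψ 1 + v * ψ 2 + H * ψ 3)
        + p * (-ny * ψ 1 + nx * ψ 2) := by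
  simp only [tangentialFlux, fluxX, fluxY, dotProduct, Fin.sum_univ_four, Pi.add_apply,
    Pi.smul_apply, smul_eq_mul, cons_val_zero, cons_val_one, cons_val_two, cons_val_three,
    head_cons, tail_cons]
  ring

theorem tangential_component_eq {nx ny : ℝ} (hn : nx ^ 2 + ny ^ 2 = 1) (vn vt : ℝ) :
    -ny * (vn * nx - vt * ny) + nx * (vn * ny + vt * nx) = vt := by
  linear_combination vt * hn

end Euler2D

open Euler2D

theorem adjoint_interior_shock_condition_simplification_general
    (nx ny vt H vnp vnm ρp ρm pp pm : ℝ) (Dt : Fin 4 → ℝ)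
    (hn : nx^2 + ny^2 = 1)
    (hmass : ρp * vnp = ρm * vnm) :
    ((-ny) • (![ρp * (vnp*nx - vt*ny),
                ρp * (vnp*nx - vt*ny)^2 + pp,
                ρp * (vnp*nx - vt*ny) * (vnp*ny + vt*nx),
                ρp * (vnp*nx - vt*ny) * H] : Fin 4 → ℝ)
      + nx • (![ρp * (vnp*ny + vt*nx),
                ρp * (vnp*nx - vt*ny) * (vnp*ny + vt*nx),
                ρp * (vnp*ny + vt*nx)^2 + pp,
                ρp * (vnp*ny + vt*nx) * H] : Fin 4 → ℝ)
      - ((-ny) • (![ρm * (vnm*nx - vt*ny),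
                ρm * (vnm*nx - vt*ny)^2 + pm,
                ρm * (vnm*nx - vt*ny) * (vnm*ny + vt*nx),
                ρm * (vnm*nx - vt*ny) * H] : Fin 4 → ℝ)
        + nx • (![ρm * (vnm*ny + vt*nx),
                ρm * (vnm*nx - vt*ny) * (vnm*ny + vt*nx),
                ρm * (vnm*ny + vt*nx)^2 + pm,
                ρm * (vnm*ny + vt*nx) * H] : Fin 4 → ℝ))) ⬝ᵥ Dt
    = vt * (ρp - ρm) * (Dt 0 + H * Dt 3)
      + ((pp - pm) + vt^2 * (ρp - ρm)) * (-ny * Dt 1 + nx * Dt 2) := by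
  change (tangentialFlux nx ny ρp (vnp * nx - vt * ny) (vnp * ny + vt * nx) pp H
      - tangentialFlux nx ny ρm (vnm * nx - vt * ny) (vnm * ny + vt * nx) pm H) ⬝ᵥ Dt = _
  rw [sub_dotProduct, tangentialFlux_dotProduct, tangentialFlux_dotProduct,
    tangential_component_eq hn, tangential_component_eq hn]
  linear_combination vt * (nx * Dt 1 + ny * Dt 2) * hmass

theorem adjoint_interior_shock_condition_simplification
    (nx ny vt H vnp vnm ρp ρm pp pm : ℝ) (Dt : Fin 4 → ℝ)
    (hn : nx^2 + ny^2 = 1)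
    (hmass : ρp * vnp = ρm * vnm)
    (hmom : pp + ρp * vnp^2 = pm + ρm * vnm^2) :
    ((-ny) • (![ρp * (vnp*nx - vt*ny),
                ρp * (vnp*nx - vt*ny)^2 + pp,
                ρp * (vnp*nx - vt*ny) * (vnp*ny + vt*nx),
                ρp * (vnp*nx - vt*ny) * H] : Fin 4 → ℝ)
      + nx • (![ρp * (vnp*ny + vt*nx),
                ρp * (vnp*nx - vt*ny) * (vnp*ny + vt*nx),
                ρp * (vnp*ny + vt*nx)^2 + pp,
                ρp * (vnp*ny + vt*nx) * H] : Fin 4 → ℝ)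
      - ((-ny) • (![ρm * (vnm*nx - vt*ny),
                ρm * (vnm*nx - vt*ny)^2 + pm,
                ρm * (vnm*nx - vt*ny) * (vnm*ny + vt*nx),
                ρm * (vnm*nx - vt*ny) * H] : Fin 4 → ℝ)
        + nx • (![ρm * (vnm*ny + vt*nx),
                ρm * (vnm*nx - vt*ny) * (vnm*ny + vt*nx),
                ρm * (vnm*ny + vt*nx)^2 + pm,
                ρm * (vnm*ny + vt*nx) * H] : Fin 4 → ℝ))) ⬝ᵥ Dt
    = vt * (ρp - ρm) * (Dt 0 + H * Dt 3)
      + ((pp - pm) + vt^2 * (ρp - ρm)) * (-ny * Dt 1 + nx * Dt 2) :=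
  adjoint_interior_shock_condition_simplification_general nx ny vt H vnp vnm ρp ρm pp pm Dt hn hmass
end

section
/- At a stagnation streamline of a 2-D Euler flow (where v_n = U·n = 0 across the streamline and the state W is continuous), the matrix A_n = n_xA + n_yB has rank exactly 2, and the kernel condition A_nᵀ(ψ⁺ − ψ⁻) = 0 on the adjoint jump is equivalent to the two scalar relations [n_xψ₂ + n_yψ₃] = 0 and n_y[ψ₁] − v_t[ψ₂] + n_yH[ψ₄] = 0 (for n_x generic). -/
open Matrix

theorem Matrix.rank_eq_card_of_eq_mul_of_isUnit_submatrix {m n k K : Type*} [Fintype m]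
    [Fintype n] [Fintype k] [DecidableEq k] [Field K] {A : Matrix m n K} {P : Matrix m k K}
    {M : Matrix k n K} (hA : A = P * M) (r : k → m) (c : k → n)
    (hunit : IsUnit (A.submatrix r c)) : A.rank = Fintype.card k := by
  refine le_antisymm ?_ ?_
  · rw [hA]
    exact (rank_mul_le_right P M).trans M.rank_le_card_height
  · rw [← rank_of_isUnit _ hunit]
    exact rank_submatrix_le A r c

section StagnationStreamline

variable {γ u v H nx ny : ℝ}

lemma An_of_normal_velocity_eq_zero (hvn : u * nx + v * ny = 0) :
    An γ u v H nx ny =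
      !![0, nx, ny, 0;
         (γ-1)*((u^2+v^2)/2)*nx, -((γ-2)*u*nx), u*ny-(γ-1)*v*nx, (γ-1)*nx;
         (γ-1)*((u^2+v^2)/2)*ny, v*nx-(γ-1)*u*ny, -((γ-2)*v*ny), (γ-1)*ny;
         0, H*nx, H*ny, 0] := by
  rw [An, hvn]
  ring_nf

lemma An_eq_mul_of_normal_velocity_eq_zero (hnx : nx ≠ 0) (hvn : u * nx + v * ny = 0) :
    An γ u v H nx ny =
      !![1, 0; 0, 1; (v * nx - u * ny) / nx, ny / nx; H, 0] *
      !![0, nx, ny, 0;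
         (γ-1)*((u^2+v^2)/2)*nx, -((γ-2)*u*nx), u*ny-(γ-1)*v*nx, (γ-1)*nx] := by
  rw [An_of_normal_velocity_eq_zero hvn]
  ext i j
  fin_cases i <;> fin_cases j <;> simp [mul_apply, Fin.sum_univ_two] <;> field_simp <;> ring

lemma isUnit_An_submatrix (hγ : γ ≠ 1) (hnx : nx ≠ 0) :
    IsUnit ((An γ u v H nx ny).submatrix ![0, 1] ![1, 3]) := by
  have hdet : ((An γ u v H nx ny).submatrix ![0, 1] ![1, 3]).det = (γ - 1) * nx ^ 2 := by
    simp only [det_fin_two, An, submatrix_apply, of_apply, cons_val', cons_val_zero, cons_val_one,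
      cons_val_fin_one, cons_val]
    ring
  rw [isUnit_iff_isUnit_det, hdet, isUnit_iff_ne_zero]
  exact mul_ne_zero (sub_ne_zero.2 hγ) (pow_ne_zero 2 hnx)

theorem rank_An_of_normal_velocity_eq_zero (hγ : γ ≠ 1) (hnx : nx ≠ 0)
    (hvn : u * nx + v * ny = 0) : (An γ u v H nx ny).rank = 2 :=
  rank_eq_card_of_eq_mul_of_isUnit_submatrix (An_eq_mul_of_normal_velocity_eq_zero hnx hvn) _ _
    (isUnit_An_submatrix hγ hnx)

lemma An_transpose_mulVec_of_normal_velocity_eq_zero (hvn : u * nx + v * ny = 0) (ψ : Fin 4 → ℝ) :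
    (An γ u v H nx ny)ᵀ *ᵥ ψ =
      ![(γ - 1) * ((u ^ 2 + v ^ 2) / 2) * (nx * ψ 1 + ny * ψ 2),
        nx * ψ 0 - (γ - 2) * u * nx * ψ 1 + (v * nx - (γ - 1) * u * ny) * ψ 2 + H * nx * ψ 3,
        ny * ψ 0 + (u * ny - (γ - 1) * v * nx) * ψ 1 - (γ - 2) * v * ny * ψ 2 + H * ny * ψ 3,
        (γ - 1) * (nx * ψ 1 + ny * ψ 2)] := by
  rw [An_of_normal_velocity_eq_zero hvn]
  ext j
  fin_cases j <;> simp [mulVec, dotProduct, Fin.sum_univ_four] <;> ring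

theorem An_transpose_mulVec_eq_zero_iff (hγ : γ ≠ 1) (hny : ny ≠ 0)
    (hvn : u * nx + v * ny = 0) (ψ : Fin 4 → ℝ) :
    (An γ u v H nx ny)ᵀ *ᵥ ψ = 0 ↔
      nx * ψ 1 + ny * ψ 2 = 0 ∧ ny * ψ 0 - (u * -ny + v * nx) * ψ 1 + ny * H * ψ 3 = 0 := by
  rw [An_transpose_mulVec_of_normal_velocity_eq_zero hvn]
  simp only [cons_eq_zero_iff, zero_empty, and_true]
  have hγ1 : γ - 1 ≠ 0 := sub_ne_zero.2 hγ
  constructor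
  · rintro ⟨-, -, h2, h3⟩
    have e1 := (mul_eq_zero.1 h3).resolve_left hγ1
    exact ⟨e1, by linear_combination h2 + (γ - 2) * v * e1⟩
  · rintro ⟨e1, e2⟩
    refine ⟨by linear_combination (γ - 1) * ((u ^ 2 + v ^ 2) / 2) * e1, ?_,
      by linear_combination e2 - (γ - 2) * v * e1, by linear_combination (γ - 1) * e1⟩
    refine (mul_eq_zero.1 ?_).resolve_left hny
    linear_combination (v * nx - (γ - 1) * u * ny) * e1 + nx * e2

end StagnationStreamline

theorem stagnation_streamline_adjoint_jump_general (γ u v H vt nx ny : ℝ) (ψp ψm : Fin 4 → ℝ)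
    (hγ : 1 < γ) (hnx : nx ≠ 0) (hny : ny ≠ 0)
    (hvn : u*nx + v*ny = 0) (hvt : vt = u*(-ny) + v*nx) :
    (An γ u v H nx ny).rank = 2 ∧
    ((An γ u v H nx ny).transpose.mulVec (ψp - ψm) = 0 ↔
      (nx * (ψp 1 - ψm 1) + ny * (ψp 2 - ψm 2) = 0 ∧
       ny * (ψp 0 - ψm 0) - vt * (ψp 1 - ψm 1) + ny * H * (ψp 3 - ψm 3) = 0)) := by
  subst hvt
  exact ⟨rank_An_of_normal_velocity_eq_zero hγ.ne' hnx hvn,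
    An_transpose_mulVec_eq_zero_iff hγ.ne' hny hvn (ψp - ψm)⟩

theorem stagnation_streamline_adjoint_jump (γ u v H c vt nx ny : ℝ) (ψp ψm : Fin 4 → ℝ)
    (hγ : 1 < γ) (hc : 0 < c)
    (hn : nx^2 + ny^2 = 1) (hnx : nx ≠ 0) (hny : ny ≠ 0)
    (hvn : u*nx + v*ny = 0) (hvt : vt = u*(-ny) + v*nx) (hvt0 : vt ≠ 0)
    (hH : H = c^2/(γ-1) + (u^2+v^2)/2) :
    (An γ u v H nx ny).rank = 2 ∧
    ((An γ u v H nx ny).transpose.mulVec (ψp - ψm) = 0 ↔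
      (nx * (ψp 1 - ψm 1) + ny * (ψp 2 - ψm 2) = 0 ∧
       ny * (ψp 0 - ψm 0) - vt * (ψp 1 - ψm 1) + ny * H * (ψp 3 - ψm 3) = 0)) :=
  stagnation_streamline_adjoint_jump_general γ u v H vt nx ny ψp ψm hγ hnx hny hvn hvt
end

section
/- In contrast, for the boundary-modified flux F^{JST_a}_{3/2} with fourth-difference term k̄⁴_{3/2}κ_{3/2}(W₃ − 3W₂ + 2W₁), the corresponding adjoint combination −3(Λ₁−Λ₂)k̄⁴_{3/2}κ_{3/2} + 3(Λ₂−Λ₃)k̄⁴_{5/2}κ_{5/2} − (Λ₃−Λ₄)κ_{7/2}k̄⁴_{7/2} is in general only O(Δξ) times κ (not O(Δξ³) times κ): there exist smooth Λ, κ, k̄⁴ for which this combination, divided by Δξ·κ, does not tend to zero as Δξ → 0. -/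
open Filter Topology Asymptotics

/- Adjoint inconsistency of the boundary-modified flux F^{JST_a}_{3/2}: there exist
smooth Λ, κ, k̄⁴ (with κ, k̄⁴ positive) for which the penultimate-cell adjoint
combination −3(Λ₁−Λ₂)k̄⁴_{3/2}κ_{3/2} + 3(Λ₂−Λ₃)k̄⁴_{5/2}κ_{5/2} − (Λ₃−Λ₄)κ_{7/2}k̄⁴_{7/2},
divided by Δξ·κ, does not tend to zero as Δξ → 0⁺.  (The cell j sits at (j−1/2)Δξ and
the face j+1/2 at jΔξ from the boundary.) -/
theorem jst_adjoint_penultimate_inconsistency :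
    ∃ (Λ : ℝ → Fin 4 → ℝ) (κ k4 : ℝ → ℝ),
      (∀ i, ContDiff ℝ (⊤ : ℕ∞) (fun x => Λ x i)) ∧ ContDiff ℝ (⊤ : ℕ∞) κ ∧ ContDiff ℝ (⊤ : ℕ∞) k4 ∧
      (∀ x, 0 < κ x) ∧ (∀ x, 0 < k4 x) ∧
      ∃ i : Fin 4, ¬ Tendsto (fun h : ℝ =>
          (- 3 * (Λ (h/2) i - Λ (3*h/2) i) * (k4 h * κ h)
           + 3 * (Λ (3*h/2) i - Λ (5*h/2) i) * (k4 (2*h) * κ (2*h))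
           - (Λ (5*h/2) i - Λ (7*h/2) i) * (κ (3*h) * k4 (3*h))) / (h * κ h))
        (𝓝[>] 0) (𝓝 0) := by
  refine ⟨fun x _ => x, fun _ => 1, fun _ => 1, fun i => contDiff_id, contDiff_const,
    contDiff_const, fun _ => one_pos, fun _ => one_pos, 0, ?_⟩
  intro hT
  have heq : ∀ h ∈ Set.Ioi (0:ℝ),
      (- 3 * (h/2 - 3*h/2) * ((1:ℝ) * 1)
       + 3 * (3*h/2 - 5*h/2) * ((1:ℝ) * 1)
       - (5*h/2 - 7*h/2) * ((1:ℝ) * 1)) / (h * 1) = 1 := by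
    intro h hh
    rw [Set.mem_Ioi] at hh
    field_simp
    ring
  have h1 : Tendsto (fun h : ℝ =>
      (- 3 * (h/2 - 3*h/2) * ((1:ℝ) * 1)
       + 3 * (3*h/2 - 5*h/2) * ((1:ℝ) * 1)
       - (5*h/2 - 7*h/2) * ((1:ℝ) * 1)) / (h * 1)) (𝓝[>] 0) (𝓝 1) := by
    refine Tendsto.congr' ?_ tendsto_const_nhds
    filter_upwards [self_mem_nhdsWithin] with h hh
    exact (heq h hh).symm
  have := tendsto_nhds_unique hT h1
  norm_num at this
end

section
/- Replacing the boundary-adjacent fourth-difference factor (W₃ − 3W₂ + 2W₁) by (W₃ − 2W₂ + W₁) restores the cancellation: the resulting adjoint combination −2(Λ₁−Λ₂)k̄⁴_{3/2}κ_{3/2} + 3(Λ₂−Λ₃)k̄⁴_{5/2}κ_{5/2} − (Λ₃−Λ₄)κ_{7/2}k̄⁴_{7/2} + (boundary contributions of order Δξ·κ dominated by O(1) boundary terms) differs from a telescoping third-order difference by terms of order O(Δξ²)·κ, hence is O(Δξ²)·κ; in particular for smooth Λ, κ, k̄⁴ the leading O(Δξ)·κ inconsistency vanishes. -/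
open Filter Topology Asymptotics

/-!
The adjoint combination `F(h)` vanishes at `h = 0`, and it is `C²`. Each difference
`Λ(a h) - Λ(b h)` vanishes at `0` with derivative `(a - b) Λ'(0)`, while every weight
`k̄⁴ κ` reduces to `k̄⁴(0) κ(0)` there, so `F'(0) = (2 - 3 + 1) Λ'(0) k̄⁴(0) κ(0) = 0`. With the
unmodified coefficient `-3` in place of `-2` this would be `Λ'(0) k̄⁴(0) κ(0)`, the `O(Δξ)`
inconsistency. Taylor's theorem to second order then gives `F = O(h²)`.
-/

theorem ContDiff.isBigO_sub_sub_smul_deriv {E : Type*} [NormedAddCommGroup E] [NormedSpace ℝ E]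
    {f : ℝ → E} (hf : ContDiff ℝ 2 f) (x₀ : ℝ) :
    (fun x => f x - f x₀ - (x - x₀) • deriv f x₀) =O[𝓝 x₀] fun x => (x - x₀) ^ 2 := by
  have taylor := (taylor_isLittleO_univ (n := 2) hf (x₀ := x₀)).isBigO
  have quadratic : (fun x => ((2 : ℝ)⁻¹ * (x - x₀) ^ 2) • iteratedDeriv 2 f x₀)
      =O[𝓝 x₀] fun x => (x - x₀) ^ 2 := by
    simpa using ((isBigO_refl _ _).const_mul_left (2 : ℝ)⁻¹).smul
      (isBigO_const_one ℝ (iteratedDeriv 2 f x₀) (𝓝 x₀))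
  refine (taylor.add quadratic).congr_left fun x => ?_
  simp only [taylorWithinEval_succ, taylor_within_zero_eval, iteratedDerivWithin_univ]
  norm_num
  abel

theorem ContDiff.isBigO_sq_of_hasDerivAt_zero {E : Type*} [NormedAddCommGroup E]
    [NormedSpace ℝ E] {f : ℝ → E} {x₀ : ℝ} (hf : ContDiff ℝ 2 f) (h₀ : f x₀ = 0)
    (h₁ : HasDerivAt f 0 x₀) : f =O[𝓝 x₀] fun x => (x - x₀) ^ 2 := by
  simpa [h₀, h₁.deriv] using hf.isBigO_sub_sub_smul_deriv x₀

theorem hasDerivAt_comp_sub_comp_mul {L m φ ψ : ℝ → ℝ} {a b x : ℝ}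
    (hL : DifferentiableAt ℝ L (φ x)) (hm : DifferentiableAt ℝ m x) (hφ : HasDerivAt φ a x)
    (hψ : HasDerivAt ψ b x) (hφψ : φ x = ψ x) :
    HasDerivAt (fun t => (L (φ t) - L (ψ t)) * m t) ((a - b) * deriv L (φ x) * m x) x := by
  have hLφ := hL.hasDerivAt.comp x hφ
  have hLψ := (hφψ ▸ hL).hasDerivAt.comp x hψ
  refine ((hLφ.sub hLψ).mul hm.hasDerivAt).congr_deriv ?_
  simp only [Pi.sub_apply, Function.comp_apply, hφψ, sub_self]
  ring

theorem jst_adjoint_penultimate_consistency_modified_general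
    (Λ : ℝ → Fin 4 → ℝ) (κ k4 : ℝ → ℝ)
    (hΛ : ∀ i, ContDiff ℝ 4 (fun x => Λ x i))
    (hκ : ContDiff ℝ 3 κ) (hk4 : ContDiff ℝ 3 k4)
    (i : Fin 4) :
    (fun h : ℝ =>
        - 2 * (Λ (h/2) i - Λ (3*h/2) i) * (k4 h * κ h)
        + 3 * (Λ (3*h/2) i - Λ (5*h/2) i) * (k4 (2*h) * κ (2*h))
        - (Λ (5*h/2) i - Λ (7*h/2) i) * (κ (3*h) * k4 (3*h)))
      =O[𝓝 0] (fun h : ℝ => h ^ 2) := by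
  have hL : ContDiff ℝ 2 (fun x => Λ x i) := (hΛ i).of_le (by norm_num)
  have hκ₂ : ContDiff ℝ 2 κ := hκ.of_le (by norm_num)
  have hk4₂ : ContDiff ℝ 2 k4 := hk4.of_le (by norm_num)
  have hLd : Differentiable ℝ (fun x => Λ x i) := hL.differentiable (by norm_num)
  have hκd : Differentiable ℝ κ := hκ₂.differentiable (by norm_num)
  have hk4d : Differentiable ℝ k4 := hk4₂.differentiable (by norm_num)
  have hscale (c : ℝ) : HasDerivAt (fun h : ℝ => c * h / 2) (c / 2) 0 := by
    simpa using ((hasDerivAt_id' 0).const_mul c).div_const 2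
  have outer := hasDerivAt_comp_sub_comp_mul (hLd _) (by fun_prop : DifferentiableAt ℝ
    (fun h => k4 h * κ h) 0) (by simpa using hscale 1) (hscale 3) (by simp)
  have middle := hasDerivAt_comp_sub_comp_mul (hLd _) (by fun_prop : DifferentiableAt ℝ
    (fun h => k4 (2 * h) * κ (2 * h)) 0) (hscale 3) (hscale 5) (by simp)
  have inner := hasDerivAt_comp_sub_comp_mul (hLd _) (by fun_prop : DifferentiableAt ℝ
    (fun h => κ (3 * h) * k4 (3 * h)) 0) (hscale 5) (hscale 7) (by simp)
  refine (ContDiff.isBigO_sq_of_hasDerivAt_zero ?_ (by simp) ?_).congr_right (by simp)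
  · fun_prop
  · convert ((outer.const_mul (-2)).fun_add (middle.const_mul 3)).fun_sub inner using 1
    · funext h
      ring
    · norm_num
      ring

theorem jst_adjoint_penultimate_consistency_modified
    (Λ : ℝ → Fin 4 → ℝ) (κ k4 : ℝ → ℝ)
    (hΛ : ∀ i, ContDiff ℝ 4 (fun x => Λ x i))
    (hκ : ContDiff ℝ 3 κ) (hk4 : ContDiff ℝ 3 k4)
    (hκpos : ∀ x, 0 < κ x) (hk4pos : ∀ x, 0 < k4 x) (i : Fin 4) :
    (fun h : ℝ =>
        - 2 * (Λ (h/2) i - Λ (3*h/2) i) * (k4 h * κ h)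
        + 3 * (Λ (3*h/2) i - Λ (5*h/2) i) * (k4 (2*h) * κ (2*h))
        - (Λ (5*h/2) i - Λ (7*h/2) i) * (κ (3*h) * k4 (3*h)))
      =O[𝓝 0] (fun h : ℝ => h ^ 2) :=
  jst_adjoint_penultimate_consistency_modified_general Λ κ k4 hΛ hκ hk4 i
end
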